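/- For a nonzero generalized Euclidean distance matrix D, one has 1'D†1 = 0 if and only if there exists a vector f orthogonal to 1 with Df = 1, where D† denotes the Moore-Penrose inverse. -/

import Mathlib

/-!
The kernels of `D` and of `Dᵀ` (again a GEDM, with `a` and `b` swapped) are orthogonal to `1`:
if `D z = 0`, pairing with `1` and with `z` and using `L 1 = 0` gives
`a² tr(L) (1ᵀz) + b² n (diag L)ᵀz = 0` and `(a² + b²)(1ᵀz)((diag L)ᵀz) = 2ab zᵀLz ≥ 0`,
which together with `tr L > 0` force `1ᵀz = 0`.
Hence `1` lies in the range of `D`, so `D D† 1 = 1` and `f = D† 1` is a solution whenever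
`1ᵀD†1 = 0`; conversely, if `D f = 1` then `f - D† 1` lies in the kernel of `D`, so `1ᵀD†1 = 1ᵀf`.
-/

open Matrix

/-- `Dp` is the Moore-Penrose inverse of `D`. -/
def IsMoorePenrose {n : ℕ} (D Dp : Matrix (Fin n) (Fin n) ℝ) : Prop :=
  D * Dp * D = D ∧ Dp * D * Dp = Dp ∧ (D * Dp)ᵀ = D * Dp ∧ (Dp * D)ᵀ = Dp * D

section PseudoInverse

variable {m n : Type*} [Fintype m] [Fintype n] {D : Matrix m n ℝ} {G : Matrix n m ℝ}

theorem mulVec_mulVec_eq_self_of_orthogonal_ker_transpose (hDGD : D * G * D = D)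
    (hDG : (D * G)ᵀ = D * G) {y : m → ℝ} (hy : ∀ z, Dᵀ *ᵥ z = 0 → y ⬝ᵥ z = 0) :
    D *ᵥ (G *ᵥ y) = y := by
  set r := y - D *ᵥ (G *ᵥ y)
  have hDtG : Dᵀ * (D * G) = Dᵀ := by
    rw [← hDG, ← transpose_mul, hDGD]
  have hr : Dᵀ *ᵥ r = 0 := by
    rw [mulVec_sub, mulVec_mulVec, mulVec_mulVec, Matrix.mul_assoc, hDtG, sub_self]
  have hrr : r ⬝ᵥ r = 0 := by
    have hDr : (D *ᵥ (G *ᵥ y)) ⬝ᵥ r = 0 := by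
      rw [dotProduct_comm, dotProduct_mulVec, ← mulVec_transpose, hr, zero_dotProduct]
    rw [sub_dotProduct, hy r hr, hDr, sub_zero]
  exact (sub_eq_zero.mp (dotProduct_self_eq_zero.mp hrr)).symm

theorem dotProduct_mulVec_eq_of_mulVec_eq (hDGD : D * G * D = D) {x : n → ℝ}
    (hx : ∀ z, D *ᵥ z = 0 → x ⬝ᵥ z = 0) {f : n → ℝ} {y : m → ℝ} (hf : D *ᵥ f = y) :
    x ⬝ᵥ (G *ᵥ y) = x ⬝ᵥ f := by
  have hker : D *ᵥ (f - G *ᵥ y) = 0 := by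
    rw [mulVec_sub, ← hf, mulVec_mulVec, mulVec_mulVec, hDGD, sub_self]
  have := hx _ hker
  rw [dotProduct_sub, sub_eq_zero] at this
  exact this.symm

end PseudoInverse

section GEDM

variable {ι : Type*}

def gedm (a b : ℝ) (L : Matrix ι ι ℝ) : Matrix ι ι ℝ :=
  of fun i j => a ^ 2 * L i i + b ^ 2 * L j j - 2 * a * b * L i j

theorem gedm_transpose {L : Matrix ι ι ℝ} (hL : L.IsSymm) (a b : ℝ) :
    (gedm a b L)ᵀ = gedm b a L := by
  ext i j
  simp only [gedm, transpose_apply, of_apply, hL.apply i j]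
  ring

theorem gedm_eq (a b : ℝ) (L : Matrix ι ι ℝ) :
    gedm a b L = a ^ 2 • vecMulVec (diag L) 1 + b ^ 2 • vecMulVec 1 (diag L) - (2 * a * b) • L := by
  ext i j
  simp [gedm]

variable [Fintype ι]

theorem dotProduct_gedm_mulVec (a b : ℝ) (L : Matrix ι ι ℝ) (w z : ι → ℝ) :
    w ⬝ᵥ (gedm a b L *ᵥ z) = a ^ 2 * (w ⬝ᵥ diag L) * (1 ⬝ᵥ z)
      + b ^ 2 * (w ⬝ᵥ 1) * (diag L ⬝ᵥ z) - 2 * a * b * (w ⬝ᵥ (L *ᵥ z)) := by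
  simp only [gedm_eq, sub_mulVec, add_mulVec, smul_mulVec, vecMulVec_mulVec, op_smul_eq_smul,
    dotProduct_sub, dotProduct_add, dotProduct_smul, smul_eq_mul]
  ring

theorem Matrix.PosSemidef.trace_pos_of_ne_zero {L : Matrix ι ι ℝ} (hL : L.PosSemidef)
    (hL0 : L ≠ 0) : 0 < L.trace :=
  hL.trace_nonneg.lt_of_ne' (hL.trace_eq_zero_iff.not.mpr hL0)

theorem one_dotProduct_eq_zero_of_gedm_mulVec_eq_zero {L : Matrix ι ι ℝ} (hL : L.PosSemidef)
    (hL1 : L *ᵥ 1 = 0) (hL0 : L ≠ 0) {a b : ℝ} (ha : 0 < a) (hb : 0 < b) {z : ι → ℝ}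
    (hz : gedm a b L *ᵥ z = 0) : 1 ⬝ᵥ z = 0 := by
  have h1L : ∀ v, 1 ⬝ᵥ (L *ᵥ v) = 0 := fun v => by
    rw [dotProduct_mulVec, ← mulVec_transpose, (isHermitian_iff_isSymm.mp hL.isHermitian).eq, hL1,
      zero_dotProduct]
  have htr : 0 < 1 ⬝ᵥ diag L := by
    rw [one_dotProduct]; exact hL.trace_pos_of_ne_zero hL0
  have hq : 0 ≤ z ⬝ᵥ (L *ᵥ z) := by simpa using hL.dotProduct_mulVec_nonneg z
  have hn : (0 : ℝ) ≤ (1 : ι → ℝ) ⬝ᵥ 1 := by rw [one_dotProduct_one]; positivity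
  have h1 := dotProduct_gedm_mulVec a b L 1 z
  have h2 := dotProduct_gedm_mulVec a b L z z
  rw [hz, dotProduct_zero, h1L] at h1
  rw [hz, dotProduct_zero, dotProduct_comm z, dotProduct_comm z 1] at h2
  have key : (a ^ 2 + b ^ 2) * a ^ 2 * (1 ⬝ᵥ diag L) * (1 ⬝ᵥ z) ^ 2
      = -(2 * a * b ^ 3 * ((1 : ι → ℝ) ⬝ᵥ 1) * (z ⬝ᵥ (L *ᵥ z))) := by
    linear_combination (-(a ^ 2 + b ^ 2) * (1 ⬝ᵥ z)) * h1 + (b ^ 2 * ((1 : ι → ℝ) ⬝ᵥ 1)) * h2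
  have hsq : (1 ⬝ᵥ z) ^ 2 ≤ 0 :=
    nonpos_of_mul_nonpos_right (by rw [key, neg_nonpos]; positivity) (by positivity)
  exact pow_eq_zero_iff two_ne_zero |>.mp (le_antisymm hsq (sq_nonneg _))

end GEDM

/-- For a nonzero GEDM `D`, `1ᵀ D† 1 = 0` iff some `f ⊥ 1` satisfies `D f = 1`. -/
theorem stmt9 (n : ℕ) (L D : Matrix (Fin n) (Fin n) ℝ) (hL : L.PosSemidef)
    (hL1 : L *ᵥ (fun _ => (1 : ℝ)) = 0) (hL0 : L ≠ 0)
    (a b : ℝ) (ha : 0 < a) (hb : 0 < b)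
    (hD : ∀ i j, D i j = a ^ 2 * L i i + b ^ 2 * L j j - 2 * a * b * L i j)
    (Dp : Matrix (Fin n) (Fin n) ℝ) (hDp : IsMoorePenrose D Dp) :
    (fun _ => (1 : ℝ)) ⬝ᵥ (Dp *ᵥ fun _ => (1 : ℝ)) = 0 ↔
    ∃ f : Fin n → ℝ, (fun _ => (1 : ℝ)) ⬝ᵥ f = 0 ∧ D *ᵥ f = fun _ => (1 : ℝ) := by
  obtain rfl : D = gedm a b L := Matrix.ext hD
  obtain ⟨hDDpD, -, hDDp, -⟩ := hDp
  have hker : ∀ z, gedm a b L *ᵥ z = 0 → 1 ⬝ᵥ z = 0 := fun z =>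
    one_dotProduct_eq_zero_of_gedm_mulVec_eq_zero hL hL1 hL0 ha hb
  have hkerT : ∀ z, (gedm a b L)ᵀ *ᵥ z = 0 → 1 ⬝ᵥ z = 0 := by
    rw [gedm_transpose (isHermitian_iff_isSymm.mp hL.isHermitian)]
    exact fun z => one_dotProduct_eq_zero_of_gedm_mulVec_eq_zero hL hL1 hL0 hb ha
  constructor
  · exact fun h => ⟨Dp *ᵥ 1, h, mulVec_mulVec_eq_self_of_orthogonal_ker_transpose hDDpD hDDp hkerT⟩
  · rintro ⟨f, hf, hDf⟩
    exact (dotProduct_mulVec_eq_of_mulVec_eq hDDpD hker hDf).trans hf
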